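/- arXiv:0908.0046 — 2 statements merged into one kernel-verified Lean document; each statement's English description precedes it below -/
import Mathlib

section
/- The bilinear form B on ℝⁿ × ℝ defined by B((v,τ),(v',τ')) = h(v,v') − (ω(v)−τ)(ω(v')−τ') is a nondegenerate symmetric bilinear form of index 1. Precisely: (i) B is symmetric; (ii) B is nondegenerate (if B(u,u') = 0 for all u' ∈ ℝⁿ × ℝ then u = 0); (iii) there exists a vector u ∈ ℝⁿ × ℝ with B(u,u) < 0; (iv) there exists an n-dimensional linear subspace of ℝⁿ × ℝ on which B is positive definite; and (v) every linear subspace of ℝⁿ × ℝ on which B is negative definite has dimension at most 1. -/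
/-!
Both (iv) and (v) come from the graph of `ω`, i.e. the hyperplane `τ = ω v`: there the second
term of `B` vanishes, so `B` restricts to the positive definite `h`. Hence the graph is an
`n`-dimensional positive definite subspace, and a negative definite subspace meets it only in `0`,
so it embeds into `ℝ` through the functional `(v, τ) ↦ τ - ω v`.
-/

namespace RandersForm

variable {V : Type*} [AddCommGroup V] [Module ℝ V]
  (h : V →ₗ[ℝ] V →ₗ[ℝ] ℝ) (ω : V →ₗ[ℝ] ℝ)

def randersForm (u u' : V × ℝ) : ℝ :=
  h u.1 u'.1 - (ω u.1 - u.2) * (ω u'.1 - u'.2)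

theorem randersForm_comm (hsymm : ∀ v w : V, h v w = h w v) (u u' : V × ℝ) :
    randersForm h ω u u' = randersForm h ω u' u := by
  rw [randersForm, randersForm, hsymm]
  ring

theorem randersForm_zero_one : randersForm h ω (0, 1) (0, 1) = -1 := by
  simp [randersForm]

theorem randersForm_of_mem_graph {u : V × ℝ} (hu : u ∈ ω.graph) (u' : V × ℝ) :
    randersForm h ω u u' = h u.1 u'.1 := by
  rw [LinearMap.mem_graph_iff] at hu
  simp [randersForm, hu]

theorem fst_ne_zero_of_mem_graph {u : V × ℝ} (hu : u ∈ ω.graph) (hne : u ≠ 0) : u.1 ≠ 0 := by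
  rintro h0
  rw [LinearMap.mem_graph_iff, h0, map_zero] at hu
  exact hne (Prod.ext h0 hu)

theorem randersForm_self_pos_of_mem_graph (hpos : ∀ v : V, v ≠ 0 → 0 < h v v)
    {u : V × ℝ} (hu : u ∈ ω.graph) (hne : u ≠ 0) : 0 < randersForm h ω u u := by
  rw [randersForm_of_mem_graph h ω hu]
  exact hpos _ (fst_ne_zero_of_mem_graph ω hu hne)

theorem eq_zero_of_randersForm_eq_zero (hpos : ∀ v : V, v ≠ 0 → 0 < h v v)
    (u : V × ℝ) (hu : ∀ u' : V × ℝ, randersForm h ω u u' = 0) : u = 0 := by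
  have hgraph : u ∈ ω.graph := by
    have h01 := hu (0, 1)
    simp only [randersForm, map_zero, zero_sub, mul_neg, mul_one,
      neg_sub, sub_eq_zero] at h01
    exact (LinearMap.mem_graph_iff ω u).2 h01.symm
  by_contra hne
  exact (randersForm_self_pos_of_mem_graph h ω hpos hgraph hne).ne' (hu u)

theorem finrank_graph : Module.finrank ℝ ω.graph = Module.finrank ℝ V := by
  rw [LinearMap.graph_eq_range_prod, LinearMap.finrank_range_of_inj]
  exact fun v w hvw => congrArg Prod.fst hvw

theorem finrank_le_one_of_randersForm_neg (hpos : ∀ v : V, v ≠ 0 → 0 < h v v)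
    (W : Submodule ℝ (V × ℝ)) (hW : ∀ u ∈ W, u ≠ 0 → randersForm h ω u u < 0) :
    Module.finrank ℝ W ≤ 1 := by
  have hinj : Function.Injective (((-ω).coprod LinearMap.id).domRestrict W) := by
    rw [← LinearMap.ker_eq_bot, LinearMap.ker_eq_bot']
    intro u hu
    have hgraph : (u : V × ℝ) ∈ ω.graph := by
      rw [LinearMap.graph_eq_ker_coprod]
      exact hu
    by_contra hne
    have hne' : (u : V × ℝ) ≠ 0 := by exact_mod_cast hne
    exact (hW u u.2 hne').not_gt (randersForm_self_pos_of_mem_graph h ω hpos hgraph hne')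
  simpa using LinearMap.finrank_le_finrank_of_injective hinj

end RandersForm

open RandersForm in
theorem stmt_0_general (n : ℕ)
    (h : (Fin n → ℝ) →ₗ[ℝ] (Fin n → ℝ) →ₗ[ℝ] ℝ)
    (hsymm : ∀ v w : Fin n → ℝ, h v w = h w v)
    (hpos : ∀ v : Fin n → ℝ, v ≠ 0 → 0 < h v v)
    (ω : (Fin n → ℝ) →ₗ[ℝ] ℝ)
    (B : ((Fin n → ℝ) × ℝ) → ((Fin n → ℝ) × ℝ) → ℝ)
    (hB : ∀ u u' : (Fin n → ℝ) × ℝ,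
      B u u' = h u.1 u'.1 - (ω u.1 - u.2) * (ω u'.1 - u'.2)) :
    -- (i) B is symmetric
    (∀ u u' : (Fin n → ℝ) × ℝ, B u u' = B u' u) ∧
    -- (ii) B is nondegenerate
    (∀ u : (Fin n → ℝ) × ℝ, (∀ u' : (Fin n → ℝ) × ℝ, B u u' = 0) → u = 0) ∧
    -- (iii) there is a timelike vector
    (∃ u : (Fin n → ℝ) × ℝ, B u u < 0) ∧
    -- (iv) there is an n-dimensional subspace on which B is positive definite
    (∃ W : Submodule ℝ ((Fin n → ℝ) × ℝ), Module.finrank ℝ W = n ∧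
      ∀ u ∈ W, u ≠ 0 → 0 < B u u) ∧
    -- (v) every subspace on which B is negative definite has dimension at most 1
    (∀ W : Submodule ℝ ((Fin n → ℝ) × ℝ),
      (∀ u ∈ W, u ≠ 0 → B u u < 0) → Module.finrank ℝ W ≤ 1) := by
  obtain rfl : B = randersForm h ω := funext fun u => funext fun u' => hB u u'
  refine ⟨randersForm_comm h ω hsymm, eq_zero_of_randersForm_eq_zero h ω hpos,
    ⟨(0, 1), by rw [randersForm_zero_one]; norm_num⟩,
    ⟨ω.graph, by rw [finrank_graph, Module.finrank_fin_fun],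
      fun u hu hne => randersForm_self_pos_of_mem_graph h ω hpos hu hne⟩,
    finrank_le_one_of_randersForm_neg h ω hpos⟩

/-- The bilinear form `B((v,τ),(v',τ')) = h(v,v') − (ω(v)−τ)(ω(v')−τ')` on `ℝⁿ × ℝ`,
associated to a positive definite symmetric bilinear form `h` and a one-form `ω`
satisfying the Randers condition, is a nondegenerate symmetric bilinear form of index 1. -/
theorem stmt_0 (n : ℕ)
    (h : (Fin n → ℝ) →ₗ[ℝ] (Fin n → ℝ) →ₗ[ℝ] ℝ)
    (hsymm : ∀ v w : Fin n → ℝ, h v w = h w v)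
    (hpos : ∀ v : Fin n → ℝ, v ≠ 0 → 0 < h v v)
    (ω : (Fin n → ℝ) →ₗ[ℝ] ℝ)
    (hrand : ∀ v : Fin n → ℝ, v ≠ 0 → (ω v) ^ 2 < h v v)
    (B : ((Fin n → ℝ) × ℝ) → ((Fin n → ℝ) × ℝ) → ℝ)
    (hB : ∀ u u' : (Fin n → ℝ) × ℝ,
      B u u' = h u.1 u'.1 - (ω u.1 - u.2) * (ω u'.1 - u'.2)) :
    -- (i) B is symmetric
    (∀ u u' : (Fin n → ℝ) × ℝ, B u u' = B u' u) ∧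
    -- (ii) B is nondegenerate
    (∀ u : (Fin n → ℝ) × ℝ, (∀ u' : (Fin n → ℝ) × ℝ, B u u' = 0) → u = 0) ∧
    -- (iii) there is a timelike vector
    (∃ u : (Fin n → ℝ) × ℝ, B u u < 0) ∧
    -- (iv) there is an n-dimensional subspace on which B is positive definite
    (∃ W : Submodule ℝ ((Fin n → ℝ) × ℝ), Module.finrank ℝ W = n ∧
      ∀ u ∈ W, u ≠ 0 → 0 < B u u) ∧
    -- (v) every subspace on which B is negative definite has dimension at most 1
    (∀ W : Submodule ℝ ((Fin n → ℝ) × ℝ),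
      (∀ u ∈ W, u ≠ 0 → B u u < 0) → Module.finrank ℝ W ≤ 1) :=
  stmt_0_general n h hsymm hpos ω B hB
end

section
/- Let x : [0,1] → U be a C¹ curve with ẋ(s) ≠ 0 for all s which is a critical point of the Randers energy, i.e. the momentum p(s) := ∂_v R(x(s), ẋ(s)) satisfies p'(s) = ∂_q R(x(s), ẋ(s)), where R(p,v) = √(h_p(v,v)) + ω_p(v). Let W : [0,1] → ℝⁿ be C¹ with W(0) = 0, and define u(s) := ∫₀ˢ ( ∂_q R(x(ν), ẋ(ν))[W(ν)] + ∂_v R(x(ν), ẋ(ν))[Ẇ(ν)] ) dν, the t-component of the variational lift Ψ'(x)[W]. Then for every s ∈ [0,1], u(s) = h_{x(s)}(W(s), ẋ(s))/√(h_{x(s)}(ẋ(s), ẋ(s))) + ω_{x(s)}(W(s)); equivalently, the lifted variational field (W(s), u(s)) is g-orthogonal to the velocity ż(s) of the future pointing lightlike lift z = (x, t₀ + ∫₀^· R(x,ẋ)). -/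
/-- For a Randers geodesic `x` and a variation field `W` with `W(0) = 0`, the
`t`-component `u(s) = ∫₀ˢ (∂_q R(x,ẋ)[W] + ∂_v R(x,ẋ)[Ẇ])` of the variational lift
`Ψ'(x)[W]` equals `h(W,ẋ)/√(h(ẋ,ẋ)) + ω(W)`; equivalently, `(W,u)` is `g`-orthogonal to
the velocity of the future pointing lightlike lift of `x`. -/
theorem stmt_10 (n : ℕ) (U : Set (Fin n → ℝ)) (hU : IsOpen U)
    (h : (Fin n → ℝ) → (Fin n → ℝ) →ₗ[ℝ] (Fin n → ℝ) →ₗ[ℝ] ℝ)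
    (ω : (Fin n → ℝ) → (Fin n → ℝ) →ₗ[ℝ] ℝ)
    (hsymm : ∀ p ∈ U, ∀ v v' : Fin n → ℝ, h p v v' = h p v' v)
    (hpos : ∀ p ∈ U, ∀ v : Fin n → ℝ, v ≠ 0 → 0 < h p v v)
    (hsmooth_h : ContDiff ℝ (⊤ : ℕ∞) fun pvv : (Fin n → ℝ) × (Fin n → ℝ) × (Fin n → ℝ) =>
      h pvv.1 pvv.2.1 pvv.2.2)
    (hsmooth_ω : ContDiff ℝ (⊤ : ℕ∞) fun pv : (Fin n → ℝ) × (Fin n → ℝ) => ω pv.1 pv.2)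
    (hrand : ∀ p ∈ U, ∀ v : Fin n → ℝ, v ≠ 0 → (ω p v) ^ 2 < h p v v)
    (R : (Fin n → ℝ) → (Fin n → ℝ) → ℝ)
    (hR : ∀ p v : Fin n → ℝ, R p v = Real.sqrt (h p v v) + ω p v)
    -- the partial Fréchet derivatives of R
    (Rq Rv : (Fin n → ℝ) → (Fin n → ℝ) → ((Fin n → ℝ) →L[ℝ] ℝ))
    (hRq : ∀ q ∈ U, ∀ v : Fin n → ℝ, v ≠ 0 → HasFDerivAt (fun q' => R q' v) (Rq q v) q)
    (hRv : ∀ q ∈ U, ∀ v : Fin n → ℝ, v ≠ 0 → HasFDerivAt (fun v' => R q v') (Rv q v) v)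
    -- the curve x, C¹ with nonvanishing velocity, contained in U
    (x x' : ℝ → (Fin n → ℝ))
    (hx : ∀ s ∈ Set.Icc (0 : ℝ) 1, HasDerivWithinAt x (x' s) (Set.Icc 0 1) s)
    (hx'c : ContinuousOn x' (Set.Icc 0 1))
    (hxU : ∀ s ∈ Set.Icc (0 : ℝ) 1, x s ∈ U)
    (hx0 : ∀ s ∈ Set.Icc (0 : ℝ) 1, x' s ≠ 0)
    -- x is a critical point of the Randers energy (Euler–Lagrange equation)
    (hEL : ∀ s ∈ Set.Icc (0 : ℝ) 1,
      HasDerivWithinAt (fun ν => Rv (x ν) (x' ν)) (Rq (x s) (x' s)) (Set.Icc 0 1) s)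
    -- the variation field W, C¹ with W(0) = 0
    (W W' : ℝ → (Fin n → ℝ))
    (hW : ∀ s ∈ Set.Icc (0 : ℝ) 1, HasDerivWithinAt W (W' s) (Set.Icc 0 1) s)
    (hW'c : ContinuousOn W' (Set.Icc 0 1))
    (hW0 : W 0 = 0)
    -- the t-component of the variational lift Ψ'(x)[W]
    (u : ℝ → ℝ)
    (hu : ∀ s : ℝ, u s = ∫ ν in (0 : ℝ)..s,
      ((Rq (x ν) (x' ν)) (W ν) + (Rv (x ν) (x' ν)) (W' ν))) :
    ∀ s ∈ Set.Icc (0 : ℝ) 1,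
      u s = h (x s) (W s) (x' s) / Real.sqrt (h (x s) (x' s) (x' s)) + ω (x s) (W s) ∧
      -- equivalently, (W(s), u(s)) is g-orthogonal to ż(s) = (ẋ(s), R(x(s),ẋ(s)))
      h (x s) (W s) (x' s)
        - (ω (x s) (W s) - u s) * (ω (x s) (x' s) - R (x s) (x' s)) = 0 := by
  classical
  -- a continuous-bilinear-map version of `h`
  have hBex : ∀ q : Fin n → ℝ, ∃ B : (Fin n → ℝ) →L[ℝ] (Fin n → ℝ) →L[ℝ] ℝ,
      ∀ a c, B a c = h q a c := by
    intro q
    refine ⟨LinearMap.toContinuousLinearMap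
      { toFun := fun a => LinearMap.toContinuousLinearMap (h q a)
        map_add' := by intro a b; ext c; simp
        map_smul' := by intro m a; ext c; simp }, ?_⟩
    intro a c; simp
  choose B hB using hBex
  -- explicit formula for the fiber derivative Rv
  have keyv : ∀ q ∈ U, ∀ v : Fin n → ℝ, v ≠ 0 → ∀ w : Fin n → ℝ,
      Rv q v w = h q w v / Real.sqrt (h q v v) + ω q w := by
    intro q hq v hv w
    have hpos' : 0 < h q v v := hpos q hq v hv
    have hsne : Real.sqrt (h q v v) ≠ 0 := (Real.sqrt_pos.2 hpos').ne'
    have hBfun : (fun v' => h q v' v') = fun v' => B q v' v' :=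
      funext fun a => (hB q a a).symm
    have h1 : HasFDerivAt (fun v' => h q v' v')
        (((B q) v).comp (ContinuousLinearMap.id ℝ (Fin n → ℝ)) + (B q).flip v) v := by
      rw [hBfun]
      exact (B q).hasFDerivAt.clm_apply (hasFDerivAt_id v)
    have h2 := h1.sqrt (ne_of_gt hpos')
    have h3 : HasFDerivAt (fun v' => ω q v') (LinearMap.toContinuousLinearMap (ω q)) v := by
      have := (LinearMap.toContinuousLinearMap (ω q)).hasFDerivAt (x := v)
      simpa using this
    have h4 := h2.add h3
    have h5 : (fun v' => R q v') = fun v' => Real.sqrt (h q v' v') + ω q v' :=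
      funext fun a => hR q a
    have h6 := hRv q hq v hv
    rw [h5] at h6
    have h7 := h6.unique h4
    rw [h7]
    have e1 : ((((B q) v).comp (ContinuousLinearMap.id ℝ (Fin n → ℝ)) + (B q).flip v)) w
        = h q v w + h q w v := by
      simp [hB]
    simp only [ContinuousLinearMap.add_apply, ContinuousLinearMap.smul_apply, e1,
      smul_eq_mul, LinearMap.coe_toContinuousLinearMap']
    rw [hsymm q hq v w]
    field_simp
    ring
  -- explicit formula for the base derivative Rq
  have keyq : ∀ q ∈ U, ∀ v : Fin n → ℝ, v ≠ 0 →
      Rq q v = (1 / (2 * Real.sqrt (h q v v))) •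
          ((fderiv ℝ (fun pvv : (Fin n → ℝ) × (Fin n → ℝ) × (Fin n → ℝ) =>
              h pvv.1 pvv.2.1 pvv.2.2) (q, v, v)).comp
            ((ContinuousLinearMap.id ℝ (Fin n → ℝ)).prod 0)) +
        (fderiv ℝ (fun pv : (Fin n → ℝ) × (Fin n → ℝ) => ω pv.1 pv.2) (q, v)).comp
          ((ContinuousLinearMap.id ℝ (Fin n → ℝ)).prod 0) := by
    intro q hq v hv
    have hpos' : 0 < h q v v := hpos q hq v hv
    have hin1 : HasFDerivAt (fun q' : Fin n → ℝ => (q', (v, v)))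
        ((ContinuousLinearMap.id ℝ (Fin n → ℝ)).prod 0) q :=
      (hasFDerivAt_id q).prodMk (hasFDerivAt_const (v, v) q)
    have hH1 : HasFDerivAt (fun pvv : (Fin n → ℝ) × (Fin n → ℝ) × (Fin n → ℝ) =>
          h pvv.1 pvv.2.1 pvv.2.2)
        (fderiv ℝ (fun pvv : (Fin n → ℝ) × (Fin n → ℝ) × (Fin n → ℝ) =>
          h pvv.1 pvv.2.1 pvv.2.2) (q, v, v)) (q, v, v) :=
      ((hsmooth_h.differentiable (by simp)) (q, v, v)).hasFDerivAt
    have h1 : HasFDerivAt (fun q' => h q' v v)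
        ((fderiv ℝ (fun pvv : (Fin n → ℝ) × (Fin n → ℝ) × (Fin n → ℝ) =>
            h pvv.1 pvv.2.1 pvv.2.2) (q, v, v)).comp
          ((ContinuousLinearMap.id ℝ (Fin n → ℝ)).prod 0)) q := by
      exact hH1.comp q hin1
    have h2 := h1.sqrt (ne_of_gt hpos')
    have hin2 : HasFDerivAt (fun q' : Fin n → ℝ => (q', v))
        ((ContinuousLinearMap.id ℝ (Fin n → ℝ)).prod 0) q :=
      (hasFDerivAt_id q).prodMk (hasFDerivAt_const v q)
    have hOm1 : HasFDerivAt (fun pv : (Fin n → ℝ) × (Fin n → ℝ) => ω pv.1 pv.2)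
        (fderiv ℝ (fun pv : (Fin n → ℝ) × (Fin n → ℝ) => ω pv.1 pv.2) (q, v)) (q, v) :=
      ((hsmooth_ω.differentiable (by simp)) (q, v)).hasFDerivAt
    have h3 : HasFDerivAt (fun q' => ω q' v)
        ((fderiv ℝ (fun pv : (Fin n → ℝ) × (Fin n → ℝ) => ω pv.1 pv.2) (q, v)).comp
          ((ContinuousLinearMap.id ℝ (Fin n → ℝ)).prod 0)) q := by
      exact hOm1.comp q hin2
    have h4 := h2.add h3
    have h5 : (fun q' => R q' v) = fun q' => Real.sqrt (h q' v v) + ω q' v :=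
      funext fun a => hR a v
    have h6 := hRq q hq v hv
    rw [h5] at h6
    exact h6.unique h4
  -- continuity facts
  have cx : ContinuousOn x (Set.Icc (0:ℝ) 1) := fun s hs => (hx s hs).continuousWithinAt
  have cW : ContinuousOn W (Set.Icc (0:ℝ) 1) := fun s hs => (hW s hs).continuousWithinAt
  have cRv : ContinuousOn (fun ν => Rv (x ν) (x' ν)) (Set.Icc (0:ℝ) 1) :=
    fun s hs => (hEL s hs).continuousWithinAt
  have ctriple : ContinuousOn (fun ν => ((x ν, x' ν, x' ν) :
      (Fin n → ℝ) × (Fin n → ℝ) × (Fin n → ℝ))) (Set.Icc (0:ℝ) 1) :=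
    cx.prodMk (hx'c.prodMk hx'c)
  have chxx : ContinuousOn (fun ν => h (x ν) (x' ν) (x' ν)) (Set.Icc (0:ℝ) 1) :=
    hsmooth_h.continuous.comp_continuousOn ctriple
  have csqrt : ContinuousOn (fun ν => Real.sqrt (h (x ν) (x' ν) (x' ν))) (Set.Icc (0:ℝ) 1) :=
    Real.continuous_sqrt.comp_continuousOn chxx
  have hsqpos : ∀ s ∈ Set.Icc (0:ℝ) 1, 0 < Real.sqrt (h (x s) (x' s) (x' s)) :=
    fun s hs => Real.sqrt_pos.2 (hpos (x s) (hxU s hs) (x' s) (hx0 s hs))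
  have cscal : ContinuousOn (fun ν => 1 / (2 * Real.sqrt (h (x ν) (x' ν) (x' ν))))
      (Set.Icc (0:ℝ) 1) := by
    refine continuousOn_const.div (continuousOn_const.mul csqrt) ?_
    intro s hs
    have := hsqpos s hs
    positivity
  have cfd1 : ContinuousOn (fun ν => fderiv ℝ
      (fun pvv : (Fin n → ℝ) × (Fin n → ℝ) × (Fin n → ℝ) => h pvv.1 pvv.2.1 pvv.2.2)
      (x ν, x' ν, x' ν)) (Set.Icc (0:ℝ) 1) :=
    (hsmooth_h.continuous_fderiv (by simp)).comp_continuousOn ctriple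
  have cfd2 : ContinuousOn (fun ν => fderiv ℝ
      (fun pv : (Fin n → ℝ) × (Fin n → ℝ) => ω pv.1 pv.2) (x ν, x' ν)) (Set.Icc (0:ℝ) 1) :=
    (hsmooth_ω.continuous_fderiv (by simp)).comp_continuousOn (cx.prodMk hx'c)
  have cRq : ContinuousOn (fun ν => Rq (x ν) (x' ν)) (Set.Icc (0:ℝ) 1) := by
    have cc1 : ContinuousOn (fun _ : ℝ =>
        (ContinuousLinearMap.id ℝ (Fin n → ℝ)).prod
          (0 : (Fin n → ℝ) →L[ℝ] (Fin n → ℝ) × (Fin n → ℝ))) (Set.Icc (0:ℝ) 1) :=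
      continuousOn_const
    have cc2 : ContinuousOn (fun _ : ℝ =>
        (ContinuousLinearMap.id ℝ (Fin n → ℝ)).prod
          (0 : (Fin n → ℝ) →L[ℝ] (Fin n → ℝ))) (Set.Icc (0:ℝ) 1) :=
      continuousOn_const
    refine ContinuousOn.congr
      ((cscal.smul (cfd1.clm_comp cc1)).add (cfd2.clm_comp cc2)) ?_
    intro s hs
    exact keyq (x s) (hxU s hs) (x' s) (hx0 s hs)
  -- continuity of the integrand
  have cg : ContinuousOn
      (fun ν => (Rq (x ν) (x' ν)) (W ν) + (Rv (x ν) (x' ν)) (W' ν)) (Set.Icc (0:ℝ) 1) :=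
    (cRq.clm_apply cW).add (cRv.clm_apply hW'c)
  -- the fundamental theorem of calculus
  have hFderiv : ∀ ν ∈ Set.Icc (0:ℝ) 1,
      HasDerivWithinAt (fun t => Rv (x t) (x' t) (W t))
        ((Rq (x ν) (x' ν)) (W ν) + (Rv (x ν) (x' ν)) (W' ν)) (Set.Icc 0 1) ν :=
    fun ν hν => (hEL ν hν).clm_apply (hW ν hν)
  intro s hs
  obtain ⟨hs0, hs1⟩ := hs
  have hsub : Set.Icc (0:ℝ) s ⊆ Set.Icc 0 1 := Set.Icc_subset_Icc le_rfl hs1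
  have hus : u s = Rv (x s) (x' s) (W s) := by
    rw [hu s]
    have hftc := intervalIntegral.integral_eq_sub_of_hasDeriv_right_of_le hs0
      (f := fun t => Rv (x t) (x' t) (W t))
      (f' := fun ν => (Rq (x ν) (x' ν)) (W ν) + (Rv (x ν) (x' ν)) (W' ν))
      (fun ν hν => ((hFderiv ν (hsub hν)).continuousWithinAt).mono hsub)
      (fun ν hν => by
        have hν1 : ν ∈ Set.Icc (0:ℝ) 1 := ⟨le_of_lt hν.1, le_trans (le_of_lt hν.2) hs1⟩
        have hmem : Set.Icc (0:ℝ) 1 ∈ nhds ν :=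
          Icc_mem_nhds hν.1 (lt_of_lt_of_le hν.2 hs1)
        exact (((hFderiv ν hν1).hasDerivAt hmem).hasDerivWithinAt))
      ((cg.mono (by rw [Set.uIcc_of_le hs0]; exact hsub)).intervalIntegrable)
    rw [hftc]
    simp [hW0]
  have hsmem : s ∈ Set.Icc (0:ℝ) 1 := ⟨hs0, hs1⟩
  have hmain : u s = h (x s) (W s) (x' s) / Real.sqrt (h (x s) (x' s) (x' s)) + ω (x s) (W s) := by
    rw [hus]
    exact keyv (x s) (hxU s hsmem) (x' s) (hx0 s hsmem) (W s)
  refine ⟨hmain, ?_⟩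
  have hsne : Real.sqrt (h (x s) (x' s) (x' s)) ≠ 0 := (hsqpos s hsmem).ne'
  rw [hmain, hR (x s) (x' s)]
  field_simp
  ring
end
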